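/- arXiv:2002.09791 — 10 statements merged into one kernel-verified Lean document; each statement's English description precedes it below -/
import Mathlib

section
/- For the map F(z₀,z₁,z₂) = (z₀(z₀²−z₁²−z₂²), z₁²z₂, z₂(z₀²−z₂²)) on ℂ³, one has ‖F(z)‖₂ ≤ ‖z‖₂³ for all z ∈ ℂ³. -/
/-! Bound each component of `F` by the triangle inequality and submultiplicativity. In terms of
`x = ‖z₀‖²`, `y = ‖z₁‖²`, `w = ‖z₂‖²` and `s = x + y + w` it remains to see
`x s² + y² w + w (x + w)² ≤ s³`, i.e. `y² w + w (x + w)² ≤ (y + w) s²`, which already holds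
with `(y + w) s²` replaced by `w s² ≥ w ((x + w)² + y²)`. -/

lemma mul_sq_add_sq_mul_add_mul_sq_le_cube {x y w : ℝ} (hx : 0 ≤ x) (hy : 0 ≤ y) (hw : 0 ≤ w) :
    x * (x + y + w) ^ 2 + y ^ 2 * w + w * (x + w) ^ 2 ≤ (x + y + w) ^ 3 := by
  nlinarith [mul_nonneg hy (mul_nonneg hw (add_nonneg hx hw)), mul_nonneg hy (sq_nonneg (x + y + w))]

section SeminormedRing

variable {R : Type*} [SeminormedRing R]

lemma norm_sq_sub_sq_sub_sq_le (a b c : R) :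
    ‖a ^ 2 - b ^ 2 - c ^ 2‖ ≤ ‖a‖ ^ 2 + ‖b‖ ^ 2 + ‖c‖ ^ 2 :=
  calc ‖a ^ 2 - b ^ 2 - c ^ 2‖ ≤ ‖a ^ 2‖ + ‖b ^ 2‖ + ‖c ^ 2‖ :=
        (norm_sub_le _ _).trans (add_le_add (norm_sub_le _ _) le_rfl)
    _ ≤ ‖a‖ ^ 2 + ‖b‖ ^ 2 + ‖c‖ ^ 2 := by
        gcongr <;> exact norm_pow_le' _ two_pos

lemma norm_sq_sub_sq_le (a c : R) : ‖a ^ 2 - c ^ 2‖ ≤ ‖a‖ ^ 2 + ‖c‖ ^ 2 :=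
  (norm_sub_le _ _).trans (add_le_add (norm_pow_le' _ two_pos) (norm_pow_le' _ two_pos))

lemma norm_sq_mul_le (a c : R) : ‖a ^ 2 * c‖ ≤ ‖a‖ ^ 2 * ‖c‖ :=
  (norm_mul_le _ _).trans (by gcongr; exact norm_pow_le' _ two_pos)

lemma sq_norm_components_le_cube (z0 z1 z2 : R) :
    ‖z0 * (z0 ^ 2 - z1 ^ 2 - z2 ^ 2)‖ ^ 2 + ‖z1 ^ 2 * z2‖ ^ 2 + ‖z2 * (z0 ^ 2 - z2 ^ 2)‖ ^ 2
      ≤ (‖z0‖ ^ 2 + ‖z1‖ ^ 2 + ‖z2‖ ^ 2) ^ 3 := by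
  have h0 : ‖z0 * (z0 ^ 2 - z1 ^ 2 - z2 ^ 2)‖ ≤ ‖z0‖ * (‖z0‖ ^ 2 + ‖z1‖ ^ 2 + ‖z2‖ ^ 2) :=
    (norm_mul_le _ _).trans (by gcongr; exact norm_sq_sub_sq_sub_sq_le _ _ _)
  have h2 : ‖z2 * (z0 ^ 2 - z2 ^ 2)‖ ≤ ‖z2‖ * (‖z0‖ ^ 2 + ‖z2‖ ^ 2) :=
    (norm_mul_le _ _).trans (by gcongr; exact norm_sq_sub_sq_le _ _)
  calc _ ≤ (‖z0‖ * (‖z0‖ ^ 2 + ‖z1‖ ^ 2 + ‖z2‖ ^ 2)) ^ 2 + (‖z1‖ ^ 2 * ‖z2‖) ^ 2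
          + (‖z2‖ * (‖z0‖ ^ 2 + ‖z2‖ ^ 2)) ^ 2 := by
        gcongr
        exact norm_sq_mul_le _ _
    _ = ‖z0‖ ^ 2 * (‖z0‖ ^ 2 + ‖z1‖ ^ 2 + ‖z2‖ ^ 2) ^ 2 + (‖z1‖ ^ 2) ^ 2 * ‖z2‖ ^ 2
          + ‖z2‖ ^ 2 * (‖z0‖ ^ 2 + ‖z2‖ ^ 2) ^ 2 := by ring
    _ ≤ _ := mul_sq_add_sq_mul_add_mul_sq_le_cube (by positivity) (by positivity) (by positivity)

end SeminormedRing

/-- For the map `F(z₀,z₁,z₂) = (z₀(z₀²−z₁²−z₂²), z₁²z₂, z₂(z₀²−z₂²))` on `ℂ³`,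
one has `‖F(z)‖₂ ≤ ‖z‖₂³`. -/
theorem stmt_0 (z0 z1 z2 : ℂ) :
    Real.sqrt (‖z0 * (z0 ^ 2 - z1 ^ 2 - z2 ^ 2)‖ ^ 2
        + ‖z1 ^ 2 * z2‖ ^ 2
        + ‖z2 * (z0 ^ 2 - z2 ^ 2)‖ ^ 2)
      ≤ (Real.sqrt (‖z0‖ ^ 2 + ‖z1‖ ^ 2 + ‖z2‖ ^ 2)) ^ 3 := by
  rw [Real.sqrt_le_left (by positivity), ← pow_mul, pow_mul',
    Real.sq_sqrt (by positivity)]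
  exact sq_norm_components_le_cube z0 z1 z2
end

section
/- For the map G(z) = (z₀α(z) − z₁²(z₀+z₄), z₁²(z₂+z₃), z₄α(z), z₂α(z), z₃α(z)) on ℂ⁵, where α(z) = (z₀+z₄)² − (z₂+z₃)², one has ‖G(z)‖₁ ≤ ‖z‖₁³ for all z ∈ ℂ⁵. -/
/-!
By the triangle inequality every coordinate of `G(z)` is bounded by a polynomial in the moduli
`‖zᵢ‖`. With `s = ‖z₀‖ + ‖z₂‖ + ‖z₃‖ + ‖z₄‖` the common factor satisfies `‖α(z)‖ ≤ s²`, the terms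
carrying `α` sum to at most `s · ‖α(z)‖ ≤ s³`, and the two terms carrying `z₁²` to at most `‖z₁‖² s`.
Finally `s³ + ‖z₁‖² s ≤ (s + ‖z₁‖)³`.
-/

theorem norm_sq_sub_sq_le_s1 {R : Type*} [SeminormedRing R] (x y : R) :
    ‖x ^ 2 - y ^ 2‖ ≤ ‖x‖ ^ 2 + ‖y‖ ^ 2 :=
  (norm_sub_le _ _).trans (add_le_add (norm_pow_le' x two_pos) (norm_pow_le' y two_pos))

theorem norm_add_sq_sub_add_sq_le {R : Type*} [SeminormedRing R] (p q r t : R) :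
    ‖(p + q) ^ 2 - (r + t) ^ 2‖ ≤ (‖p‖ + ‖q‖ + ‖r‖ + ‖t‖) ^ 2 := by
  have hpq : ‖p + q‖ ≤ ‖p‖ + ‖q‖ := norm_add_le p q
  have hrt : ‖r + t‖ ≤ ‖r‖ + ‖t‖ := norm_add_le r t
  calc ‖(p + q) ^ 2 - (r + t) ^ 2‖ ≤ ‖p + q‖ ^ 2 + ‖r + t‖ ^ 2 := norm_sq_sub_sq_le_s1 _ _
    _ ≤ (‖p + q‖ + ‖r + t‖) ^ 2 := by nlinarith [norm_nonneg (p + q), norm_nonneg (r + t)]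
    _ ≤ (‖p‖ + ‖q‖ + ‖r‖ + ‖t‖) ^ 2 := by
      rw [add_assoc _ ‖r‖]
      gcongr

theorem mul_add_sq_mul_le_add_pow_three {s b A : ℝ} (hs : 0 ≤ s) (hb : 0 ≤ b) (hA : A ≤ s ^ 2) :
    s * A + b ^ 2 * s ≤ (s + b) ^ 3 := by
  nlinarith [mul_le_mul_of_nonneg_left hA hs, mul_nonneg hs hb, pow_nonneg hb 3, pow_nonneg hs 2]

/-- For the Grigorchuk map `G` on `ℂ⁵`, `‖G(z)‖₁ ≤ ‖z‖₁³`. -/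
theorem stmt_1 (z0 z1 z2 z3 z4 : ℂ) :
    ‖z0 * ((z0 + z4) ^ 2 - (z2 + z3) ^ 2) - z1 ^ 2 * (z0 + z4)‖
      + ‖z1 ^ 2 * (z2 + z3)‖
      + ‖z4 * ((z0 + z4) ^ 2 - (z2 + z3) ^ 2)‖
      + ‖z2 * ((z0 + z4) ^ 2 - (z2 + z3) ^ 2)‖
      + ‖z3 * ((z0 + z4) ^ 2 - (z2 + z3) ^ 2)‖
      ≤ (‖z0‖ + ‖z1‖ + ‖z2‖ + ‖z3‖
          + ‖z4‖) ^ 3 := by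
  set α := (z0 + z4) ^ 2 - (z2 + z3) ^ 2
  set s := ‖z0‖ + ‖z4‖ + ‖z2‖ + ‖z3‖
  have hα : ‖α‖ ≤ s ^ 2 := norm_add_sq_sub_add_sq_le z0 z4 z2 z3
  have h₀ : ‖z0 * α - z1 ^ 2 * (z0 + z4)‖ ≤ ‖z0‖ * ‖α‖ + ‖z1‖ ^ 2 * (‖z0‖ + ‖z4‖) := by
    refine (norm_sub_le _ _).trans ?_
    rw [norm_mul, norm_mul, norm_pow]
    gcongr
    exact norm_add_le _ _
  have h₁ : ‖z1 ^ 2 * (z2 + z3)‖ ≤ ‖z1‖ ^ 2 * (‖z2‖ + ‖z3‖) := by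
    rw [norm_mul, norm_pow]
    gcongr
    exact norm_add_le _ _
  rw [norm_mul z4, norm_mul z2, norm_mul z3]
  calc _ ≤ s * ‖α‖ + ‖z1‖ ^ 2 * s := by linarith
    _ ≤ (s + ‖z1‖) ^ 3 := mul_add_sq_mul_le_add_pow_three (by positivity) (norm_nonneg z1) hα
    _ = _ := by ring
end

section
/- Let F(z₀,z₁,z₂) = (z₀(z₀²−z₁²−z₂²), z₁²z₂, z₂(z₀²−z₂²)) and let T(x) = 2x²−1. If z ∈ ℂ³ with z₁z₂ ≠ 0 and the coordinates of z' = F(z) satisfy z₁'z₂' ≠ 0, then (z₀'² − z₁'² − z₂'²)/(2z₁'z₂') = T((z₀² − z₁² − z₂²)/(2z₁z₂)). -/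
/-- Semi-conjugacy of `F` with the Chebyshev polynomial `T(x) = 2x² − 1`. -/
theorem stmt_2 (z0 z1 z2 : ℂ) (h : z1 * z2 ≠ 0)
    (h' : (z1 ^ 2 * z2) * (z2 * (z0 ^ 2 - z2 ^ 2)) ≠ 0) :
    ((z0 * (z0 ^ 2 - z1 ^ 2 - z2 ^ 2)) ^ 2 - (z1 ^ 2 * z2) ^ 2
        - (z2 * (z0 ^ 2 - z2 ^ 2)) ^ 2) / (2 * (z1 ^ 2 * z2) * (z2 * (z0 ^ 2 - z2 ^ 2)))
      = 2 * ((z0 ^ 2 - z1 ^ 2 - z2 ^ 2) / (2 * z1 * z2)) ^ 2 - 1 := by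
  have h1 : z1 ≠ 0 := fun w => h (by simp [w])
  have h2 : z2 ≠ 0 := fun w => h (by simp [w])
  have h3 : z0 ^ 2 - z2 ^ 2 ≠ 0 := by
    intro w; apply h'; rw [w]; ring
  rw [div_eq_iff (by simp [h1, h2, h3])]
  field_simp
  ring
end

section
/- The only fixed points of the map F(z₀,z₁,z₂) = (z₀(z₀²−z₁²−z₂²), z₁²z₂, z₂(z₀²−z₂²)) on ℂ³ are: the origin (0,0,0), the two points (0, i, −i) and (0, −i, i), and the points of the surface {z ∈ ℂ³ : z₁ = 0 and z₀² − z₂² = 1}. -/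
/-- The fixed points of `F(z₀,z₁,z₂) = (z₀(z₀²−z₁²−z₂²), z₁²z₂, z₂(z₀²−z₂²))` on `ℂ³`
are exactly the origin, the two points `(0, ±i, ∓i)`, and the surface
`{z : z₁ = 0, z₀² − z₂² = 1}`. -/
theorem stmt_3 (z0 z1 z2 : ℂ) :
    (z0 * (z0 ^ 2 - z1 ^ 2 - z2 ^ 2) = z0 ∧ z1 ^ 2 * z2 = z1
        ∧ z2 * (z0 ^ 2 - z2 ^ 2) = z2)
      ↔ ((z0, z1, z2) = (0, 0, 0)
        ∨ (z0, z1, z2) = (0, Complex.I, -Complex.I)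
        ∨ (z0, z1, z2) = (0, -Complex.I, Complex.I)
        ∨ (z1 = 0 ∧ z0 ^ 2 - z2 ^ 2 = 1)) := by
  constructor
  · rintro ⟨h1, h2, h3⟩
    by_cases hz1 : z1 = 0
    · subst hz1
      by_cases hA : z0 ^ 2 - z2 ^ 2 = 1
      · exact Or.inr (Or.inr (Or.inr ⟨rfl, hA⟩))
      · left
        have hz0 : z0 * (z0 ^ 2 - z2 ^ 2 - 1) = 0 := by linear_combination h1
        have hz2 : z2 * (z0 ^ 2 - z2 ^ 2 - 1) = 0 := by linear_combination h3
        have hA' : z0 ^ 2 - z2 ^ 2 - 1 ≠ 0 := fun h => hA (by linear_combination h)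
        have e0 : z0 = 0 := by
          rcases mul_eq_zero.mp hz0 with h | h
          · exact h
          · exact absurd h hA'
        have e2 : z2 = 0 := by
          rcases mul_eq_zero.mp hz2 with h | h
          · exact h
          · exact absurd h hA'
        simp [e0, e2]
    · have h12 : z1 * z2 = 1 := by
        have : z1 * (z1 * z2 - 1) = 0 := by linear_combination h2
        rcases mul_eq_zero.mp this with h | h
        · exact absurd h hz1
        · linear_combination h
      have hz2 : z2 ≠ 0 := fun h => by simp [h] at h12
      have hA : z0 ^ 2 - z2 ^ 2 = 1 := by
        have : z2 * (z0 ^ 2 - z2 ^ 2 - 1) = 0 := by linear_combination h3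
        rcases mul_eq_zero.mp this with h | h
        · exact absurd h hz2
        · linear_combination h
      have hz0 : z0 = 0 := by
        have h' : z0 * z1 ^ 2 = 0 := by linear_combination -h1 + z0 * hA
        rcases mul_eq_zero.mp h' with h | h
        · exact h
        · exact absurd (pow_eq_zero_iff (n := 2) (by norm_num) |>.mp h) hz1
      have hz2sq : z2 ^ 2 = -1 := by linear_combination z0 * hz0 - hA
      have : (z2 - Complex.I) * (z2 + Complex.I) = 0 := by
        linear_combination hz2sq - Complex.I_sq
      rcases mul_eq_zero.mp this with h | h
      · right; right; left
        have e2 : z2 = Complex.I := by linear_combination h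
        have e1 : z1 = -Complex.I := by
          have := h12
          rw [e2] at this
          linear_combination -Complex.I * this + z1 * Complex.I_sq
        simp [hz0, e1, e2]
      · right; left
        have e2 : z2 = -Complex.I := by linear_combination h
        have e1 : z1 = Complex.I := by
          have := h12
          rw [e2] at this
          linear_combination Complex.I * this + z1 * Complex.I_sq
        simp [hz0, e1, e2]
  · rintro (h | h | h | ⟨h1, h2⟩)
    · simp_all [Prod.ext_iff]
    · simp only [Prod.mk.injEq] at h
      obtain ⟨e0, e1, e2⟩ := h
      subst e0; subst e1; subst e2
      refine ⟨by ring, ?_, ?_⟩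
      · linear_combination -Complex.I * Complex.I_sq
      · linear_combination Complex.I * Complex.I_sq
    · simp only [Prod.mk.injEq] at h
      obtain ⟨e0, e1, e2⟩ := h
      subst e0; subst e1; subst e2
      refine ⟨by ring, ?_, ?_⟩
      · linear_combination Complex.I * Complex.I_sq
      · linear_combination -Complex.I * Complex.I_sq
    · subst h1
      exact ⟨by linear_combination z0 * h2, by ring, by linear_combination z2 * h2⟩
end

section
/- The set of z ∈ ℂ³ such that F(z) = (0,0,0), where F(z₀,z₁,z₂) = (z₀(z₀²−z₁²−z₂²), z₁²z₂, z₂(z₀²−z₂²)), consists exactly of the lines spanned by (1,1,0), (−1,1,0), (0,1,0), (1,0,1), (−1,0,1), together with (0,0,0). Equivalently, in ℙ², the indeterminacy set I₁ of F is {[1:1:0], [−1:1:0], [0:1:0], [1:0:1], [−1:0:1]}. -/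
/-- The zero set of `F` in `ℂ³` consists exactly of the lines spanned by
`(1,1,0)`, `(−1,1,0)`, `(0,1,0)`, `(1,0,1)`, `(−1,0,1)` (including the origin). -/
theorem stmt_6 (z0 z1 z2 : ℂ) :
    (z0 * (z0 ^ 2 - z1 ^ 2 - z2 ^ 2) = 0 ∧ z1 ^ 2 * z2 = 0
        ∧ z2 * (z0 ^ 2 - z2 ^ 2) = 0)
      ↔ ∃ c : ℂ,
          (z0, z1, z2) = (c, c, 0) ∨ (z0, z1, z2) = (-c, c, 0)
          ∨ (z0, z1, z2) = (0, c, 0) ∨ (z0, z1, z2) = (c, 0, c)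
          ∨ (z0, z1, z2) = (-c, 0, c) := by
  constructor
  · rintro ⟨h1, h2, h3⟩
    rcases mul_eq_zero.1 h2 with h | hz2
    · -- z1 = 0
      have hz1 : z1 = 0 := by
        have := pow_eq_zero_iff (n := 2) (by norm_num) |>.1 h
        exact this
      rcases mul_eq_zero.1 h3 with hz2 | h3'
      · -- z2 = 0, z1 = 0, then h1: z0^3 = 0
        have hz0 : z0 = 0 := by
          have : z0 * z0 ^ 2 = 0 := by
            have := h1; rw [hz1, hz2] at this; linear_combination this
          rcases mul_eq_zero.1 this with h' | h'
          · exact h'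
          · exact pow_eq_zero_iff (n := 2) (by norm_num) |>.1 h'
        exact ⟨0, Or.inl (by simp [hz0, hz1, hz2])⟩
      · -- z0^2 = z2^2
        have : (z0 - z2) * (z0 + z2) = 0 := by linear_combination h3'
        rcases mul_eq_zero.1 this with h' | h'
        · exact ⟨z2, Or.inr (Or.inr (Or.inr (Or.inl (by
            simp [hz1, sub_eq_zero.1 h']))))⟩
        · exact ⟨z2, Or.inr (Or.inr (Or.inr (Or.inr (by
            have : z0 = -z2 := by linear_combination h'
            simp [hz1, this]))))⟩
    · -- z2 = 0, h1 : z0 (z0^2 - z1^2) = 0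
      have h1' : z0 * ((z0 - z1) * (z0 + z1)) = 0 := by
        rw [hz2] at h1; linear_combination h1
      rcases mul_eq_zero.1 h1' with hz0 | h'
      · exact ⟨z1, Or.inr (Or.inr (Or.inl (by simp [hz0, hz2])))⟩
      · rcases mul_eq_zero.1 h' with h'' | h''
        · exact ⟨z1, Or.inl (by simp [sub_eq_zero.1 h'', hz2])⟩
        · exact ⟨z1, Or.inr (Or.inl (by
            have : z0 = -z1 := by linear_combination h''
            simp [this, hz2]))⟩
  · rintro ⟨c, h | h | h | h | h⟩ <;>
      (simp only [Prod.mk.injEq] at h; obtain ⟨e0, e1, e2⟩ := h;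
       subst e0; subst e1; subst e2; refine ⟨by ring, by ring, by ring⟩)
end

section
/- Let F(z₀,z₁,z₂) = (z₀(z₀²−z₁²−z₂²), z₁²z₂, z₂(z₀²−z₂²)). There is no z ∈ ℂ³ and no λ ∈ ℂ \ {0} such that F(z) = λ·(1,0,1) or F(z) = λ·(−1,0,1). (The points [±1:0:1] ∈ ℙ² have no preimages under F.) -/
/-- The points `[±1:0:1] ∈ ℙ²` have no preimages under `F`. -/
theorem stmt_8 :
    ¬ ∃ (z0 z1 z2 lam : ℂ), lam ≠ 0
      ∧ (z0 * (z0 ^ 2 - z1 ^ 2 - z2 ^ 2) = lam ∨ z0 * (z0 ^ 2 - z1 ^ 2 - z2 ^ 2) = -lam)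
      ∧ z1 ^ 2 * z2 = 0
      ∧ z2 * (z0 ^ 2 - z2 ^ 2) = lam := by
  rintro ⟨z0, z1, z2, lam, hl, h1, h2, h3⟩
  rcases mul_eq_zero.mp h2 with h | h
  · -- z1 = 0
    have hz1 : z1 = 0 := by
      have := pow_eq_zero_iff (n := 2) (by norm_num) |>.mp h
      exact this
    subst hz1
    have hA : z0 ^ 2 - z2 ^ 2 ≠ 0 := by
      intro h0
      rw [h0, mul_zero] at h3
      exact hl h3.symm
    have h1' : z0 * (z0 ^ 2 - z2 ^ 2) = lam ∨ z0 * (z0 ^ 2 - z2 ^ 2) = -lam := by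
      simpa using h1
    rcases h1' with h1' | h1'
    · rw [← h3] at h1'
      have : z0 = z2 := mul_right_cancel₀ hA h1'
      apply hA; rw [this]; ring
    · rw [← h3] at h1'
      have : z0 * (z0 ^ 2 - z2 ^ 2) = (-z2) * (z0 ^ 2 - z2 ^ 2) := by
        rw [h1']; ring
      have : z0 = -z2 := mul_right_cancel₀ hA this
      apply hA; rw [this]; ring
  · -- z2 = 0
    rw [h, zero_mul] at h3
    exact hl h3.symm
end

section
/- Let F(z₀,z₁,z₂) = (z₀(z₀²−z₁²−z₂²), z₁²z₂, z₂(z₀²−z₂²)). A point z ∈ ℂ³ satisfies F(z) = λ(1,1,0) or F(z) = λ(−1,1,0) for some λ ≠ 0 if and only if z₀² = z₂² and z₀z₁²z₂ ≠ 0. In projective coordinates, the preimage of {[1:1:0],[−1:1:0]} under F is {[±1: ζ : 1] : ζ ∈ ℂ, ζ ≠ 0}. -/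
/-- A point of `ℂ³` is a preimage of `[±1:1:0]` under `F` iff `z₀² = z₂²`
and `z₀z₁²z₂ ≠ 0`. -/
theorem stmt_9 (z0 z1 z2 : ℂ) :
    (∃ lam : ℂ, lam ≠ 0
        ∧ ((z0 * (z0 ^ 2 - z1 ^ 2 - z2 ^ 2), z1 ^ 2 * z2, z2 * (z0 ^ 2 - z2 ^ 2))
              = (lam, lam, 0)
          ∨ (z0 * (z0 ^ 2 - z1 ^ 2 - z2 ^ 2), z1 ^ 2 * z2, z2 * (z0 ^ 2 - z2 ^ 2))
              = (-lam, lam, 0)))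
      ↔ (z0 ^ 2 = z2 ^ 2 ∧ z0 * z1 ^ 2 * z2 ≠ 0) := by
  constructor
  · rintro ⟨lam, hlam, h | h⟩ <;>
    · rw [Prod.ext_iff, Prod.ext_iff] at h
      obtain ⟨h1, h2, h3⟩ := h
      have hz2 : z2 ≠ 0 := by
        rintro rfl; exact hlam (by simpa using h2.symm)
      have hsq : z0 ^ 2 = z2 ^ 2 := by
        rcases mul_eq_zero.mp h3 with h | h
        · exact absurd h hz2
        · linear_combination h
      have hz1 : z1 ≠ 0 := by
        rintro rfl; exact hlam (by simpa using h2.symm)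
      have hz0 : z0 ≠ 0 := by
        rintro rfl
        apply hlam
        have : z2 ^ 2 = 0 := by linear_combination -hsq
        exact absurd (pow_eq_zero_iff two_ne_zero |>.mp this) hz2
      exact ⟨hsq, by
        simp [mul_ne_zero, hz0, hz2, pow_ne_zero, hz1]⟩
  · rintro ⟨hsq, hne⟩
    have hz0 : z0 ≠ 0 := fun h => hne (by rw [h]; ring)
    have hz1 : z1 ≠ 0 := by
      intro h; exact hne (by rw [h]; ring)
    have hz2 : z2 ≠ 0 := fun h => hne (by rw [h]; ring)
    have hlam : z1 ^ 2 * z2 ≠ 0 := mul_ne_zero (pow_ne_zero _ hz1) hz2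
    refine ⟨z1 ^ 2 * z2, hlam, ?_⟩
    have hcases : z0 = z2 ∨ z0 = -z2 := by
      have : (z0 - z2) * (z0 + z2) = 0 := by linear_combination hsq
      rcases mul_eq_zero.mp this with h | h
      · left; linear_combination h
      · right; linear_combination h
    rcases hcases with h | h
    · right
      rw [Prod.ext_iff, Prod.ext_iff]
      refine ⟨by rw [hsq, h]; ring, rfl, by rw [hsq]; ring⟩
    · left
      rw [Prod.ext_iff, Prod.ext_iff]
      refine ⟨by rw [hsq, h]; ring, rfl, by rw [hsq]; ring⟩
end

section
/- Let α(z) = (z₀+z₄)² − (z₂+z₃)² and G(z) = (z₀α(z) − z₁²(z₀+z₄), z₁²(z₂+z₃), z₄α(z), z₂α(z), z₃α(z)) on ℂ⁵. If α(z) = 0, then G(z) = z₁²(z₂+z₃)·(±1, 1, 0, 0, 0) (the sign determined by z₀+z₄ = ±(z₂+z₃)), and consequently G(G(z)) = (0,0,0,0,0). -/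
/-- The Grigorchuk map `G` on `ℂ⁵`. -/
def grigG (z : ℂ × ℂ × ℂ × ℂ × ℂ) : ℂ × ℂ × ℂ × ℂ × ℂ :=
  let α := (z.1 + z.2.2.2.2) ^ 2 - (z.2.2.1 + z.2.2.2.1) ^ 2
  (z.1 * α - z.2.1 ^ 2 * (z.1 + z.2.2.2.2), z.2.1 ^ 2 * (z.2.2.1 + z.2.2.2.1),
    z.2.2.2.2 * α, z.2.2.1 * α, z.2.2.2.1 * α)

/-!
The quadric `α = 0` is the union of the hyperplanes `z₀ + z₄ = ±(z₂ + z₃)`. On either one the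
terms carrying the factor `α` drop out of `G`, leaving `z₁²(z₂ + z₃)·(∓1, 1, 0, 0, 0)`, and `G`
vanishes on the two lines `ℂ·(±1, 1, 0, 0, 0)` because there `α = z₁²` and `z₄ = 0`.
-/

theorem grigG_of_add_eq_add {z0 z1 z2 z3 z4 : ℂ} (h : z0 + z4 = z2 + z3) :
    grigG (z0, z1, z2, z3, z4) = (-(z1 ^ 2 * (z2 + z3)), z1 ^ 2 * (z2 + z3), 0, 0, 0) := by
  simp only [grigG, h, sub_self, mul_zero, zero_sub]

theorem grigG_of_add_eq_neg_add {z0 z1 z2 z3 z4 : ℂ} (h : z0 + z4 = -(z2 + z3)) :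
    grigG (z0, z1, z2, z3, z4) = (z1 ^ 2 * (z2 + z3), z1 ^ 2 * (z2 + z3), 0, 0, 0) := by
  simp only [grigG, h, neg_sq, sub_self, mul_zero, zero_sub, mul_neg, neg_neg]

theorem grigG_self_self (s : ℂ) : grigG (s, s, 0, 0, 0) = 0 := by
  simp only [grigG, Prod.mk_eq_zero]
  refine ⟨by ring, by ring, by ring, by ring, by ring⟩

theorem grigG_neg_self (s : ℂ) : grigG (-s, s, 0, 0, 0) = 0 := by
  simp only [grigG, Prod.mk_eq_zero]
  refine ⟨by ring, by ring, by ring, by ring, by ring⟩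

/-- If `α(z) = 0` then `G(z) = z₁²(z₂+z₃)·(±1,1,0,0,0)` and `G(G(z)) = 0`. -/
theorem stmt_16 (z0 z1 z2 z3 z4 : ℂ)
    (hα : (z0 + z4) ^ 2 - (z2 + z3) ^ 2 = 0) :
    (grigG (z0, z1, z2, z3, z4) = (z1 ^ 2 * (z2 + z3), z1 ^ 2 * (z2 + z3), 0, 0, 0)
      ∨ grigG (z0, z1, z2, z3, z4)
          = (-(z1 ^ 2 * (z2 + z3)), z1 ^ 2 * (z2 + z3), 0, 0, 0))
    ∧ grigG (grigG (z0, z1, z2, z3, z4)) = (0, 0, 0, 0, 0) := by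
  rcases sq_eq_sq_iff_eq_or_eq_neg.mp (sub_eq_zero.mp hα) with h | h
  · have hG := grigG_of_add_eq_add (z1 := z1) h
    exact ⟨Or.inr hG, by rw [hG, grigG_neg_self]; rfl⟩
  · have hG := grigG_of_add_eq_neg_add (z1 := z1) h
    exact ⟨Or.inl hG, by rw [hG, grigG_self_self]; rfl⟩
end

section
/- Define X: ℂ³ → ℂ⁵ by X(w₀,w₁,w₂) = (w₀ − w₂/2, w₁, w₂/2, w₂/2, w₂/2). Let F(w) = (w₀(w₀²−w₁²−w₂²), w₁²w₂, w₂(w₀²−w₂²)) and let G(z) = (z₀α(z) − z₁²(z₀+z₄), z₁²(z₂+z₃), z₄α(z), z₂α(z), z₃α(z)) with α(z) = (z₀+z₄)² − (z₂+z₃)². Then X(F(w)) = G(X(w)) for all w ∈ ℂ³. -/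
/-- The dihedral map `F` on `ℂ³`. -/
def dihF (w : ℂ × ℂ × ℂ) : ℂ × ℂ × ℂ :=
  (w.1 * (w.1 ^ 2 - w.2.1 ^ 2 - w.2.2 ^ 2), w.2.1 ^ 2 * w.2.2,
    w.2.2 * (w.1 ^ 2 - w.2.2 ^ 2))

/-- The embedding `X : ℂ³ → ℂ⁵`. -/
noncomputable def embX (w : ℂ × ℂ × ℂ) : ℂ × ℂ × ℂ × ℂ × ℂ :=
  (w.1 - w.2.2 / 2, w.2.1, w.2.2 / 2, w.2.2 / 2, w.2.2 / 2)

/-- Semi-conjugacy: `X ∘ F = G ∘ X`. -/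
theorem stmt_17 (w : ℂ × ℂ × ℂ) : embX (dihF w) = grigG (embX w) := by
  simp only [embX, dihF, grigG]; norm_num [Prod.ext_iff]; ring_nf; tauto
end

section
/- Let G be the Grigorchuk map on ℂ⁵ with α(z) = (z₀+z₄)² − (z₂+z₃)². If z is a fixed point of G with α(z) = 1 and z₁ = 0, then z₂ = z₃ = z₄ = γ for some γ ∈ ℂ and z₀ = −γ + √(1+4γ²) or z₀ = −γ − √(1+4γ²); conversely every point of this form with α(z) = 1 is fixed by G. -/
/-- Fixed points of `G` with `α(z) = 1` and `z₁ = 0` are exactly the points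
`(−γ ± √(1+4γ²), 0, γ, γ, γ)`. -/
theorem stmt_19 (z0 z1 z2 z3 z4 : ℂ) :
    (grigG (z0, z1, z2, z3, z4) = (z0, z1, z2, z3, z4)
        ∧ (z0 + z4) ^ 2 - (z2 + z3) ^ 2 = 1 ∧ z1 = 0)
      ↔ ∃ γ s : ℂ, s ^ 2 = 1 + 4 * γ ^ 2
          ∧ (z0, z1, z2, z3, z4) = (-γ + s, 0, γ, γ, γ) := by
  simp only [grigG, Prod.mk.injEq]
  constructor
  · rintro ⟨⟨h0, h1, h2, h3, h4⟩, hα, hz1⟩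
    rw [hα] at h2 h3 h4
    simp only [mul_one] at h2 h3 h4
    subst h2 h3
    refine ⟨z4, z0 + z4, ?_, by ring, hz1, rfl, rfl, rfl⟩
    rw [← hα]; ring
  · rintro ⟨γ, s, hs, rfl, rfl, rfl, rfl, rfl⟩
    have hα : (-z4 + s + z4) ^ 2 - (z4 + z4) ^ 2 = 1 := by
      rw [show (-z4 + s + z4) ^ 2 = s ^ 2 by ring, hs]; ring
    refine ⟨⟨by rw [hα]; ring, by ring, by rw [hα]; ring, by rw [hα]; ring,
      by rw [hα]; ring⟩, hα, rfl⟩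
end
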